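/- Let P, B, D be finite types, dept : B → D, and C ⊆ P × D a compatibility relation. Suppose fs : P → ℕ, fm : P → B → ℕ, ft : B → ℕ form an integral flow of value k in the associated unit-capacity network, i.e. fs p ≤ 1, ft b ≤ 1, fm p b ≤ 1 for all p, b; fm p b = 0 whenever (p, dept b) ∉ C; fs p = ∑_b fm p b for every p; ft b = ∑_p fm p b for every b; and ∑_p fs p = k. Then there exists a valid assignment A : P → Option B admitting exactly k patients: whenever A p = some b we have (p, dept b) ∈ C, no bed is assigned to two distinct patients, and the cardinality of {p | A p ≠ none} equals k. -/
import Mathlib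


/-- An integral flow of value `k` in the unit-capacity hospital network
yields a valid assignment admitting exactly `k` patients. -/
theorem flow_to_assignment
    {P B D : Type*} [Fintype P] [Fintype B] [Fintype D] [DecidableEq B]
    (dept : B → D) (C : Set (P × D))
    (fs : P → ℕ) (fm : P → B → ℕ) (ft : B → ℕ) (k : ℕ)
    (hfs : ∀ p, fs p ≤ 1)
    (hft : ∀ b, ft b ≤ 1)
    (hfm : ∀ p b, fm p b ≤ 1)
    (hcompat : ∀ p b, (p, dept b) ∉ C → fm p b = 0)
    (hconsP : ∀ p, fs p = ∑ b, fm p b)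
    (hconsB : ∀ b, ft b = ∑ p, fm p b)
    (hval : ∑ p, fs p = k) :
    ∃ A : P → Option B,
      (∀ p b, A p = some b → (p, dept b) ∈ C) ∧
      (∀ p p' b, A p = some b → A p' = some b → p ≠ p' → False) ∧
      (Finset.univ.filter fun p => A p ≠ none).card = k := by
  classical
  set A : P → Option B := fun p => if h : ∃ b, fm p b ≠ 0 then some h.choose else none
    with hA
  have key : ∀ p b, A p = some b → fm p b = 1 := by
    intro p b hpb
    simp only [hA] at hpb
    split_ifs at hpb with h
    · have := h.choose_spec
      rw [Option.some_inj] at hpb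
      rw [hpb] at this
      have := hfm p b
      omega
  refine ⟨A, ?_, ?_, ?_⟩
  · intro p b hpb
    by_contra hc
    have := hcompat p b hc
    have := key p b hpb
    omega
  · intro p p' b hp hp' hne
    have h1 := key p b hp
    have h2 := key p' b hp'
    have hle : ({p, p'} : Finset P).sum (fun q => fm q b) ≤ ∑ q, fm q b :=
      Finset.sum_le_sum_of_subset (Finset.subset_univ _)
    rw [Finset.sum_pair hne, h1, h2] at hle
    have := hconsB b
    have := hft b
    omega
  · have hiff : ∀ p, (A p ≠ none) ↔ fs p = 1 := by
      intro p
      simp only [hA]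
      split_ifs with h
      · simp only [ne_eq, reduceCtorEq, not_false_eq_true, true_iff]
        obtain ⟨b, hb⟩ := h
        have h1 : 1 ≤ fs p := by
          rw [hconsP p]
          exact le_trans (by omega)
            (Finset.single_le_sum (fun _ _ => Nat.zero_le _) (Finset.mem_univ b))
        have := hfs p
        omega
      · simp only [ne_eq, not_true, false_iff]
        push_neg at h
        have : fs p = 0 := by
          rw [hconsP p]
          exact Finset.sum_eq_zero (fun b _ => h b)
        omega
    rw [← hval]
    rw [Finset.filter_congr (fun p _ => hiff p)]
    rw [Finset.card_filter]
    exact (Finset.sum_congr rfl (fun p _ => by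
      have := hfs p
      split_ifs with h
      · omega
      · omega)).symm
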